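/- arXiv:2309.12277 — 2 statements merged into one kernel-verified Lean document; each statement's English description precedes it below -/
import Mathlib

section
/- Let f : ℝⁿ → ℝᵐ be continuous and let α > 0. If f is α-covering at each point x ∈ ℝⁿ (with the same constant α), then f is globally α-covering: B̄(f(x), αr) ⊆ f(B̄(x, r)) for every x ∈ ℝⁿ and every r ≥ 0. -/
open Metric Set
open scoped ENNReal NNReal

noncomputable section

variable {E F : Type*} [NormedAddCommGroup E] [NormedAddCommGroup F]

/-- `f` is `α`-covering at `x`: for every `ε > 0` there is `r ∈ (0, ε]` with
`B̄(f x, α r) ⊆ f (B̄(x, r))`. -/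
def AlphaCoveringAt (f : E → F) (x : E) (α : ℝ) : Prop :=
  ∀ ε > (0:ℝ), ∃ r : ℝ, 0 < r ∧ r ≤ ε ∧
    closedBall (f x) (α * r) ⊆ f '' closedBall x r

/-- The covering bound `cov(f, x)`: supremum of all `α > 0` for which `f` is
`α`-covering at `x`. -/
def covBound (f : E → F) (x : E) : ℝ≥0∞ :=
  ⨆ (α : ℝ≥0) (_ : 0 < α ∧ AlphaCoveringAt f x (α : ℝ)), (α : ℝ≥0∞)

/-- `f` is linearly open around `xb` with constant `α`. -/
def LinOpenWith (f : E → F) (xb : E) (α : ℝ) : Prop :=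
  ∃ U ∈ nhds xb, ∃ V ∈ nhds (f xb), ∀ x ∈ U, ∀ r > (0:ℝ),
    ball (f x) (α * r) ∩ V ⊆ f '' ball x r

/-- The exact linear openness bound `lop(f, xb)` (`0` if no constant works). -/
def lopBound (f : E → F) (xb : E) : ℝ≥0∞ :=
  ⨆ (α : ℝ≥0) (_ : 0 < α ∧ LinOpenWith f xb (α : ℝ)), (α : ℝ≥0∞)

/-- `ℓ` is a Lipschitz constant of `h` on some neighbourhood of `xb`. -/
def IsLipConstAround (h : E → F) (xb : E) (ℓ : ℝ) : Prop :=
  ∃ U ∈ nhds xb, ∀ x₁ ∈ U, ∀ x₂ ∈ U, ‖h x₁ - h x₂‖ ≤ ℓ * ‖x₁ - x₂‖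

/-- `lip(h, xb)`: infimum of all `ℓ > 0` which are Lipschitz constants of `h`
on some neighbourhood of `xb` (`∞` if `h` is not locally Lipschitz at `xb`). -/
def lipBound (h : E → F) (xb : E) : ℝ≥0∞ :=
  ⨅ (ℓ : ℝ≥0) (_ : 0 < ℓ ∧ IsLipConstAround h xb (ℓ : ℝ)), (ℓ : ℝ≥0∞)

/-- `β` is a metric injectivity constant for `g` on some closed ball around `xb`. -/
def IsInjConstAround (g : E → F) (xb : E) (β : ℝ) : Prop :=
  ∃ δ > (0:ℝ), ∀ x₁ ∈ closedBall xb δ, ∀ x₂ ∈ closedBall xb δ,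
    β * ‖x₁ - x₂‖ ≤ ‖g x₁ - g x₂‖

/-- `g` is metrically injective around `xb`. -/
def MetricallyInjectiveAround (g : E → F) (xb : E) : Prop :=
  ∃ β > (0:ℝ), IsInjConstAround g xb β

/-- The metric injection bound `inj(g, xb)`: supremum of all valid `β > 0`. -/
def injBound (g : E → F) (xb : E) : ℝ≥0∞ :=
  ⨆ (β : ℝ≥0) (_ : 0 < β ∧ IsInjConstAround g xb (β : ℝ)), (β : ℝ≥0∞)

/-- `h` is a strict `μ`-estimator of `f` at `xb`: `h xb = f xb` and
`lip(f - h, xb) ≤ μ`. -/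
def IsStrictEstimator (f h : E → F) (xb : E) (μ : ℝ≥0) : Prop :=
  h xb = f xb ∧ lipBound (fun x => f x - h x) xb ≤ (μ : ℝ≥0∞)

/-- `g` is strongly (metrically) regular around `xb`: it is linearly open around
`xb` and the set-valued inverse `g⁻¹` has a single-valued graphical localization
around `(g xb, xb)`. -/
def StronglyRegularAround (g : E → F) (xb : E) : Prop :=
  (∃ α > (0:ℝ), LinOpenWith g xb α) ∧
  ∃ V ∈ nhds (g xb), ∃ U ∈ nhds xb, ∀ y ∈ V, ∃ x : E, g ⁻¹' {y} ∩ U = {x}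

section GlobalCovering

variable [NormedSpace ℝ F]

/-- The covered point is the one of the segment `[f z, y]` at distance `α r` from `f z`. -/
theorem AlphaCoveringAt.exists_dist_image_le {f : E → F} {z : E} {α ε : ℝ}
    (hcov : AlphaCoveringAt f z α) (hα : 0 < α) (hε : 0 < ε) {y : F}
    (hεy : α * ε ≤ dist (f z) y) :
    ∃ r, 0 < r ∧ r ≤ ε ∧ ∃ z' ∈ closedBall z r, dist (f z') y ≤ dist (f z) y - α * r := by
  obtain ⟨r, hr, hrε, hball⟩ := hcov ε hε
  set d := dist (f z) y
  have hd : 0 < d := (mul_pos hα hε).trans_le hεy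
  have hc : α * r / d ≤ 1 := (div_le_one hd).2 (by nlinarith)
  set y' := AffineMap.lineMap (f z) y (α * r / d)
  have hy' : y' ∈ closedBall (f z) (α * r) := by
    rw [mem_closedBall, dist_lineMap_left, Real.norm_of_nonneg (by positivity),
      div_mul_cancel₀ _ hd.ne']
  obtain ⟨z', hz', hfz'⟩ := hball hy'
  refine ⟨r, hr, hrε, z', hz', le_of_eq ?_⟩
  rw [hfz', dist_lineMap_right, Real.norm_of_nonneg (sub_nonneg.2 hc), sub_mul,
    div_mul_cancel₀ _ hd.ne', one_mul]

/-- Minimise `dist (f z) y` over the compact set of `z` with `α · dist z x ≤ α r - dist (f z) y`;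
if the minimum were positive, a covering step at the minimiser would stay in that set and
strictly decrease it. -/
theorem closedBall_mul_subset_image_closedBall [ProperSpace E] {f : E → F} {α : ℝ}
    (hα : 0 < α) (hf : Continuous f) (hcov : ∀ x, AlphaCoveringAt f x α) (x : E) (r : ℝ) :
    closedBall (f x) (α * r) ⊆ f '' closedBall x r := by
  intro y hy
  have hr : 0 ≤ r := nonneg_of_mul_nonneg_right (dist_nonneg.trans hy) hα
  set A := closedBall x r ∩ {z | dist (f z) y ≤ α * (r - dist z x)}
  have hxA : x ∈ A := ⟨mem_closedBall_self hr, by simpa [dist_comm] using hy⟩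
  have hA : IsCompact A :=
    (isCompact_closedBall x r).inter_right (isClosed_le (by fun_prop) (by fun_prop))
  obtain ⟨z, hzA, hmin⟩ := hA.exists_isMinOn ⟨x, hxA⟩ (f := fun z ↦ dist (f z) y)
    (by fun_prop)
  refine ⟨z, hzA.1, dist_le_zero.1 (not_lt.1 fun hd ↦ ?_)⟩
  have hzx : dist z x < r := sub_pos.1 (pos_of_mul_pos_right (hd.trans_le hzA.2) hα.le)
  set ε := min (dist (f z) y / α) (r - dist z x)
  have hε : 0 < ε := lt_min (div_pos hd hα) (sub_pos.2 hzx)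
  have hεy : α * ε ≤ dist (f z) y := (le_div_iff₀' hα).1 (min_le_left _ _)
  have hεr : ε ≤ r - dist z x := min_le_right _ _
  obtain ⟨s, hs, hsε, z', hz', hfz'⟩ := (hcov z).exists_dist_image_le hα hε hεy
  have hz'x : dist z' x ≤ dist z x + s :=
    (dist_triangle z' z x).trans (by linarith [mem_closedBall.1 hz'])
  have hz'A : z' ∈ A := by
    refine ⟨mem_closedBall.2 (by linarith), ?_⟩
    have hfz : dist (f z) y ≤ α * (r - dist z x) := hzA.2
    change dist (f z') y ≤ α * (r - dist z' x)
    nlinarith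
  linarith [isMinOn_iff.1 hmin z' hz'A, mul_pos hα hs]

end GlobalCovering

/-- A continuous map which is `α`-covering at every point of `ℝⁿ` (with the
same `α > 0`) is globally `α`-covering: `B̄(f x, αr) ⊆ f(B̄(x, r))` for every
`x` and every `r ≥ 0`. -/
theorem stmt15 (n m : ℕ)
    (f : EuclideanSpace ℝ (Fin n) → EuclideanSpace ℝ (Fin m))
    (α : ℝ) (hα : 0 < α)
    (hcont : Continuous f)
    (hcov : ∀ x : EuclideanSpace ℝ (Fin n), AlphaCoveringAt f x α) :
    ∀ x : EuclideanSpace ℝ (Fin n), ∀ r : ℝ, 0 ≤ r →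
      closedBall (f x) (α * r) ⊆ f '' closedBall x r :=
  fun x r _ ↦ closedBall_mul_subset_image_closedBall hα hcont hcov x r
end
end

section
/- Let f : ℝ → ℝ be defined by f(x) = sgn(x)·√|x| if |x| ≤ 1 and f(x) = x if |x| > 1, and let h₁ : ℝ → ℝ be given by h₁(t) = 1 + max{(t − 1)/2, t − 1}. Then for every ε ∈ (0, 1), setting δ_ε = ε²/(1 + ε²), one has |(f − h₁)(x₁) − (f − h₁)(x₂)| ≤ ε|x₁ − x₂| for all x₁, x₂ ∈ (1 − δ_ε, 1 + δ_ε). Consequently lip(f − h₁, 1) = 0, so h₁ is a strict 0-estimator of f at the point 1. -/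
/-!
For `x > 0` write `m = min x 1`; then `(f - h₁)(x) = √m - m / 2 - 1 / 2 = -(1 - √m)² / 2`.
On `[a, 1]` the map `y ↦ √y - y / 2` has slope at most `(1 / √a - 1) / 2`, which for
`a = 1 / (1 + ε²) = 1 - δ_ε` is `(√(1 + ε²) - 1) / 2 ≤ ε`, and `x ↦ min x 1` is 1-Lipschitz.
-/

open Set Topology

theorem abs_sqrt_sub_half_sub_sqrt_sub_half_le {a y₁ y₂ : ℝ} (ha : 0 < a)
    (hy₁ : y₁ ∈ Icc a 1) (hy₂ : y₂ ∈ Icc a 1) :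
    |(√y₁ - y₁ / 2) - (√y₂ - y₂ / 2)| ≤ (1 / √a - 1) / 2 * |y₁ - y₂| := by
  have hsa : 0 < √a := Real.sqrt_pos.2 ha
  have hs₁ : √a ≤ √y₁ ∧ √y₁ ≤ 1 :=
    ⟨Real.sqrt_le_sqrt hy₁.1, Real.sqrt_le_one.2 hy₁.2⟩
  have hs₂ : √a ≤ √y₂ ∧ √y₂ ≤ 1 :=
    ⟨Real.sqrt_le_sqrt hy₂.1, Real.sqrt_le_one.2 hy₂.2⟩
  have hsq₁ : √y₁ ^ 2 = y₁ := Real.sq_sqrt (ha.le.trans hy₁.1)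
  have hsq₂ : √y₂ ^ 2 = y₂ := Real.sq_sqrt (ha.le.trans hy₂.1)
  set t := √y₁ + √y₂
  -- Both differences are multiples of `√y₁ - √y₂`, with cofactors `1 - t / 2` and `t`.
  have hfactor : 1 - t / 2 ≤ (1 / √a - 1) / 2 * t := by
    have : 2 * √a ≤ t := by linarith
    have : 1 ≤ t / (2 * √a) := (one_le_div (by positivity)).2 this
    have : t / (2 * √a) = 1 / √a / 2 * t := by field_simp
    nlinarith
  calc |(√y₁ - y₁ / 2) - (√y₂ - y₂ / 2)| = |√y₁ - √y₂| * (1 - t / 2) := by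
        rw [← abs_of_nonneg (by linarith : 0 ≤ 1 - t / 2), ← abs_mul]
        congr 1
        linear_combination (1 / 2) * hsq₁ - (1 / 2) * hsq₂
    _ ≤ |√y₁ - √y₂| * ((1 / √a - 1) / 2 * t) := by gcongr
    _ = (1 / √a - 1) / 2 * |y₁ - y₂| := by
        rw [show y₁ - y₂ = (√y₁ - √y₂) * t by linear_combination hsq₂ - hsq₁, abs_mul,
          abs_of_nonneg (by linarith : 0 ≤ t)]
        ring

theorem sqrt_one_add_sq_sub_one_le {ε : ℝ} (hε : 0 ≤ ε) :
    (1 / √(1 / (1 + ε ^ 2)) - 1) / 2 ≤ ε := by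
  rw [Real.sqrt_div' _ (by positivity), Real.sqrt_one, one_div_one_div]
  have : √(1 + ε ^ 2) ≤ 1 + ε :=
    Real.sqrt_le_iff.2 ⟨by positivity, by nlinarith⟩
  linarith

theorem abs_sqrt_min_one_sub_le {ε x₁ x₂ : ℝ} (hε : 0 ≤ ε)
    (hx₁ : 1 / (1 + ε ^ 2) ≤ x₁) (hx₂ : 1 / (1 + ε ^ 2) ≤ x₂) :
    |(√(min x₁ 1) - min x₁ 1 / 2) - (√(min x₂ 1) - min x₂ 1 / 2)| ≤ ε * |x₁ - x₂| := by
  have ha : 1 / (1 + ε ^ 2) ≤ 1 := (div_le_one (by positivity)).2 (by nlinarith)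
  have hmem : ∀ x, 1 / (1 + ε ^ 2) ≤ x → min x 1 ∈ Icc (1 / (1 + ε ^ 2)) 1 :=
    fun x hx ↦ ⟨le_min hx ha, min_le_right _ _⟩
  calc _ ≤ (1 / √(1 / (1 + ε ^ 2)) - 1) / 2 * |min x₁ 1 - min x₂ 1| :=
        abs_sqrt_sub_half_sub_sqrt_sub_half_le (by positivity) (hmem x₁ hx₁) (hmem x₂ hx₂)
    _ ≤ ε * |x₁ - x₂| :=
        mul_le_mul (sqrt_one_add_sq_sub_one_le hε)
          (by simpa using abs_min_sub_min_le_max x₁ 1 x₂ 1) (abs_nonneg _) hε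

theorem sign_mul_sqrt_sub_max_eq {x : ℝ} (hx : 0 < x) :
    (if |x| ≤ 1 then Real.sign x * √|x| else x) - (1 + max ((x - 1) / 2) (x - 1))
      = (√(min x 1) - min x 1 / 2) - 1 / 2 := by
  rw [abs_of_pos hx]
  rcases le_or_gt x 1 with hle | hgt
  · rw [if_pos hle, Real.sign_of_pos hx, min_eq_left hle, max_eq_left (by linarith)]
    ring
  · rw [if_neg hgt.not_ge, min_eq_right hgt.le, max_eq_right (by linarith)]
    norm_num

theorem forall_pos_exists_mem_nhds_abs_sub_le {F δ : ℝ → ℝ} {x₀ : ℝ}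
    (hδ : ∀ ε ∈ Ioo (0:ℝ) 1, 0 < δ ε)
    (hF : ∀ ε ∈ Ioo (0:ℝ) 1, ∀ x₁ ∈ Ioo (x₀ - δ ε) (x₀ + δ ε),
      ∀ x₂ ∈ Ioo (x₀ - δ ε) (x₀ + δ ε), |F x₁ - F x₂| ≤ ε * |x₁ - x₂|) :
    ∀ ℓ > (0:ℝ), ∃ U ∈ 𝓝 x₀, ∀ x₁ ∈ U, ∀ x₂ ∈ U, |F x₁ - F x₂| ≤ ℓ * |x₁ - x₂| := by
  intro ℓ hℓ
  set ε := min ℓ (1 / 2)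
  have hε : ε ∈ Ioo (0:ℝ) 1 :=
    ⟨lt_min hℓ one_half_pos, (min_le_right _ _).trans_lt one_half_lt_one⟩
  have hδε := hδ ε hε
  refine ⟨Ioo (x₀ - δ ε) (x₀ + δ ε), Ioo_mem_nhds (by linarith) (by linarith),
    fun x₁ hx₁ x₂ hx₂ ↦ ?_⟩
  exact (hF ε hε x₁ hx₁ x₂ hx₂).trans (by gcongr; exact min_le_left _ _)

/-- With `f(x) = sgn(x)√|x|` for `|x| ≤ 1`, `f(x) = x` for `|x| > 1`, and
`h₁(t) = 1 + max{(t-1)/2, t-1}`: for every `ε ∈ (0,1)`, with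
`δ_ε = ε²/(1+ε²)`, one has `|(f-h₁)(x₁) - (f-h₁)(x₂)| ≤ ε|x₁ - x₂|` on
`(1-δ_ε, 1+δ_ε)`; consequently `lip(f - h₁, 1) = 0` and `h₁(1) = f(1)`, i.e.
`h₁` is a strict `0`-estimator of `f` at `1`. -/
theorem stmt19 (f h₁ : ℝ → ℝ)
    (hf : ∀ x : ℝ, f x = if |x| ≤ 1 then Real.sign x * Real.sqrt |x| else x)
    (hh : ∀ t : ℝ, h₁ t = 1 + max ((t - 1) / 2) (t - 1)) :
    (∀ ε ∈ Ioo (0:ℝ) 1,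
      ∀ x₁ ∈ Ioo (1 - ε ^ 2 / (1 + ε ^ 2)) (1 + ε ^ 2 / (1 + ε ^ 2)),
        ∀ x₂ ∈ Ioo (1 - ε ^ 2 / (1 + ε ^ 2)) (1 + ε ^ 2 / (1 + ε ^ 2)),
          |(f x₁ - h₁ x₁) - (f x₂ - h₁ x₂)| ≤ ε * |x₁ - x₂|) ∧
    h₁ 1 = f 1 ∧
    ∀ ℓ > (0:ℝ), ∃ U ∈ nhds (1:ℝ), ∀ x₁ ∈ U, ∀ x₂ ∈ U,
      |(f x₁ - h₁ x₁) - (f x₂ - h₁ x₂)| ≤ ℓ * |x₁ - x₂| := by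
  have hrep : ∀ x > 0, f x - h₁ x = (√(min x 1) - min x 1 / 2) - 1 / 2 := fun x hx ↦ by
    rw [hf, hh]
    exact sign_mul_sqrt_sub_max_eq hx
  have hlip : ∀ ε ∈ Ioo (0:ℝ) 1,
      ∀ x₁ ∈ Ioo (1 - ε ^ 2 / (1 + ε ^ 2)) (1 + ε ^ 2 / (1 + ε ^ 2)),
        ∀ x₂ ∈ Ioo (1 - ε ^ 2 / (1 + ε ^ 2)) (1 + ε ^ 2 / (1 + ε ^ 2)),
          |(f x₁ - h₁ x₁) - (f x₂ - h₁ x₂)| ≤ ε * |x₁ - x₂| := by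
    rintro ε ⟨hε, -⟩ x₁ ⟨hx₁, -⟩ x₂ ⟨hx₂, -⟩
    have hlower : 1 - ε ^ 2 / (1 + ε ^ 2) = 1 / (1 + ε ^ 2) := by field_simp; ring
    rw [hlower] at hx₁ hx₂
    have hpos : (0:ℝ) < 1 / (1 + ε ^ 2) := by positivity
    rw [hrep x₁ (hpos.trans hx₁), hrep x₂ (hpos.trans hx₂), sub_sub_sub_cancel_right]
    exact abs_sqrt_min_one_sub_le hε.le hx₁.le hx₂.le
  refine ⟨hlip, by rw [hf, hh]; norm_num, ?_⟩
  exact forall_pos_exists_mem_nhds_abs_sub_le (F := fun x ↦ f x - h₁ x)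
    (δ := fun ε ↦ ε ^ 2 / (1 + ε ^ 2)) (fun ε hε ↦ by have := hε.1; positivity) hlip
end
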